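/- For n ≥ 4, every generating set of the monoid IOF_n^par has at least 3n−6 elements. -/

import Mathlib

/-- A partial injection on `{1,...,n}`, represented by its graph. -/
structure PInj (n : ℕ) where
  R : ℕ → ℕ → Prop
  memL : ∀ ⦃x y⦄, R x y → x ∈ Set.Icc 1 n
  memR : ∀ ⦃x y⦄, R x y → y ∈ Set.Icc 1 n
  func : ∀ ⦃x y y'⦄, R x y → R x y' → y = y'
  inj : ∀ ⦃x x' y⦄, R x y → R x' y → x = x'

namespace PInj

variable {n : ℕ}

@[ext] theorem ext {a b : PInj n} (h : ∀ x y, a.R x y ↔ b.R x y) : a = b := by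
  cases a; cases b
  simp only [mk.injEq]
  funext x y
  exact propext (h x y)

instance : Mul (PInj n) :=
  ⟨fun a b =>
    { R := fun x z => ∃ y, a.R x y ∧ b.R y z
      memL := by rintro x z ⟨y, h1, _⟩; exact a.memL h1
      memR := by rintro x z ⟨y, _, h2⟩; exact b.memR h2
      func := by
        rintro x z z' ⟨y, h1, h2⟩ ⟨y', h1', h2'⟩
        obtain rfl := a.func h1 h1'
        exact b.func h2 h2'
      inj := by
        rintro x x' z ⟨y, h1, h2⟩ ⟨y', h1', h2'⟩
        obtain rfl := b.inj h2 h2'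
        exact a.inj h1 h1' }⟩

instance : One (PInj n) :=
  ⟨{ R := fun x y => x ∈ Set.Icc 1 n ∧ y = x
     memL := by rintro x y ⟨h, rfl⟩; exact h
     memR := by rintro x y ⟨h, rfl⟩; exact h
     func := by rintro x y y' ⟨_, rfl⟩ ⟨_, rfl⟩; rfl
     inj := by rintro x x' y ⟨_, rfl⟩ ⟨_, h⟩; exact h }⟩

instance : Monoid (PInj n) where
  mul_assoc a b c := by
    ext x y
    constructor
    · rintro ⟨z, ⟨w, h1, h2⟩, h3⟩; exact ⟨w, h1, z, h2, h3⟩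
    · rintro ⟨w, h1, z, h2, h3⟩; exact ⟨z, ⟨w, h1, h2⟩, h3⟩
  one_mul a := by
    ext x y
    constructor
    · rintro ⟨z, ⟨_, rfl⟩, h⟩; exact h
    · intro h; exact ⟨x, ⟨a.memL h, rfl⟩, h⟩
  mul_one a := by
    ext x y
    constructor
    · rintro ⟨z, h, _, rfl⟩; exact h
    · intro h; exact ⟨y, h, a.memR h, rfl⟩

/-- The inverse of a partial injection. -/
def inv (a : PInj n) : PInj n where
  R := fun x y => a.R y x
  memL := by intro x y h; exact a.memR h
  memR := by intro x y h; exact a.memL h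
  func := by intro x y y' h h'; exact a.inj h h'
  inj := by intro x x' y h h'; exact a.func h h'

/-- The domain of a partial injection. -/
def dom (a : PInj n) : Set ℕ := {x | ∃ y, a.R x y}

/-- The image of a partial injection. -/
def im (a : PInj n) : Set ℕ := {y | ∃ x, a.R x y}

end PInj

/-- The strict fence (zig-zag) order on `{1,...,n}`: `x ≺ y` iff `x` is odd and
`x`, `y` are adjacent.  It is generated by `i ≺ i+1` for odd `i` and `i+1 ≺ i`
for even `i`. -/
def FenceLt (x y : ℕ) : Prop := Odd x ∧ (y = x + 1 ∨ x = y + 1)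

/-- Membership in `IOF_n^par`: order-preserving, parity-preserving,
fence-preserving, and with fence-preserving inverse. -/
def IsIOF {n : ℕ} (a : PInj n) : Prop :=
  (∀ ⦃x y x' y'⦄, a.R x y → a.R x' y' → x < x' → y < y') ∧
  (∀ ⦃x y⦄, a.R x y → x % 2 = y % 2) ∧
  (∀ ⦃x y x' y'⦄, a.R x y → a.R x' y' → FenceLt x x' → FenceLt y y') ∧
  (∀ ⦃x y x' y'⦄, a.R x y → a.R x' y' → FenceLt y y' → FenceLt x x')

/-- A partial identity: every point of the domain is fixed. -/
def IsPartialId {n : ℕ} (a : PInj n) : Prop := ∀ ⦃x y⦄, a.R x y → y = x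

/-- The partial identity `v_i` with domain `{1,...,n} \ {i}`. -/
def vMap (n i : ℕ) : PInj n where
  R := fun x y => x ∈ Set.Icc 1 n ∧ x ≠ i ∧ y = x
  memL := by rintro x y ⟨h, _, rfl⟩; exact h
  memR := by rintro x y ⟨h, _, rfl⟩; exact h
  func := by rintro x y y' ⟨_, _, rfl⟩ ⟨_, _, rfl⟩; rfl
  inj := by rintro x x' y ⟨_, _, rfl⟩ ⟨_, _, h⟩; exact h

/-- The map `u_i` with domain `{1,...,i} ∪ {i+4,...,n}`, sending `ρ ↦ ρ+2` for
`ρ ≤ i` and `ρ ↦ ρ` for `ρ ≥ i+4`. -/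
def uMap (n i : ℕ) : PInj n where
  R := fun x y => x ∈ Set.Icc 1 n ∧ y ∈ Set.Icc 1 n ∧
        ((x ≤ i ∧ y = x + 2) ∨ (i + 4 ≤ x ∧ y = x))
  memL := by rintro x y ⟨h, _, _⟩; exact h
  memR := by rintro x y ⟨_, h, _⟩; exact h
  func := by
    rintro x y y' ⟨_, _, (⟨hx, rfl⟩ | ⟨hx, rfl⟩)⟩ ⟨_, _, (⟨hx', rfl⟩ | ⟨hx', rfl⟩)⟩ <;> omega
  inj := by
    rintro x x' y ⟨_, _, (⟨hx, rfl⟩ | ⟨hx, rfl⟩)⟩ ⟨_, _, (⟨hx', h'⟩ | ⟨hx', h'⟩)⟩ <;> omega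

/-- The set `J_i = {1,...,i} ∪ {i+4,...,n}`. -/
def Jset (n i : ℕ) : Set ℕ := {x | (1 ≤ x ∧ x ≤ i) ∨ (i + 4 ≤ x ∧ x ≤ n)}

/-- `G` is a generating set of the monoid `IOF_n^par`: it consists of elements of
`IOF_n^par` and every element of `IOF_n^par` is a finite product of elements of `G`. -/
def Generates (n : ℕ) (G : Set (PInj n)) : Prop :=
  (∀ g ∈ G, IsIOF g) ∧
  ∀ a : PInj n, IsIOF a →
    ∃ l : List (PInj n), (∀ b ∈ l, b ∈ G) ∧ l.prod = a

/-!
A set `S` of partial injections is *prime* if `1 ∉ S` and a product `b * c` of elements of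
`IOF_n^par` lies in `S` only if `b` or `c` does; writing an element of `S ∩ IOF_n^par` as a
product of generators shows that every generating set meets `S`. So it suffices to exhibit
`3n - 6` pairwise disjoint prime sets, each containing an element of the monoid.

The tool is rigidity: by order and fence preservation, adjacent points of the domain of an
element go to adjacent points, so on an interval of its domain it is a translation, and a
translation of an interval by `b * c` is a translation by `b` followed by one by `c`;
parity makes all shifts even. Bounding the shifts of `b` then shows that the following sets
are prime: `{v_i}` for `1 ≤ i ≤ n`; the maps translating `[1, n - 2]` by `2`, and their
inverses; for `1 ≤ i ≤ n - 4`, the maps translating the two blocks of `J_i` so that the gap of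
width 3 between them shrinks to one point (this class contains `u_i`), and their inverses.
They are told apart by their domains and images.
-/

namespace PInj

variable {n : ℕ}

theorem one_R {x y : ℕ} : (1 : PInj n).R x y ↔ x ∈ Set.Icc 1 n ∧ y = x := Iff.rfl

theorem inv_R {a : PInj n} {x y : ℕ} : a.inv.R x y ↔ a.R y x := Iff.rfl

theorem inv_one : (1 : PInj n).inv = 1 := by
  ext x y
  simp only [inv_R, one_R]
  constructor <;> rintro ⟨hx, rfl⟩ <;> exact ⟨hx, rfl⟩

theorem mul_inv_rev (b c : PInj n) : (b * c).inv = c.inv * b.inv := by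
  ext x y
  exact ⟨fun ⟨z, h1, h2⟩ => ⟨z, h2, h1⟩, fun ⟨z, h1, h2⟩ => ⟨z, h2, h1⟩⟩

theorem dom_inv (a : PInj n) : a.inv.dom = a.im := rfl

theorem im_inv (a : PInj n) : a.inv.im = a.dom := rfl

theorem isPartialId_inv_iff {a : PInj n} : IsPartialId a.inv ↔ IsPartialId a :=
  ⟨fun h _ _ hxy => (h hxy).symm, fun h _ _ hxy => (h hxy).symm⟩

def Translates (a : PInj n) (p q m : ℕ) : Prop := ∀ k < m, a.R (p + k) (q + k)

theorem translates_zero (a : PInj n) (p q : ℕ) : a.Translates p q 0 :=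
  fun k hk => absurd hk k.not_lt_zero

theorem Translates.R_of_mem {a : PInj n} {p q m x : ℕ} (h : a.Translates p q m)
    (hpx : p ≤ x) (hx : x < p + m) : a.R x (q + (x - p)) := by
  simpa [Nat.add_sub_cancel' hpx] using h (x - p) (by omega)

theorem Translates.bounds {a : PInj n} {p q m : ℕ} (h : a.Translates p q m) (hm : 0 < m) :
    1 ≤ q ∧ q + m ≤ n + 1 := by
  have h0 := (a.memR (h 0 hm)).1
  have h1 := (a.memR (h (m - 1) (by omega))).2
  omega

end PInj

open PInj

section

variable {n : ℕ}

theorem isIOF_one : IsIOF (1 : PInj n) := by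
  refine ⟨?_, ?_, ?_, ?_⟩ <;> rintro x _ <;> simp_all [one_R]

theorem IsIOF.mul {b c : PInj n} (hb : IsIOF b) (hc : IsIOF c) : IsIOF (b * c) := by
  obtain ⟨bo, bp, bf, bf'⟩ := hb
  obtain ⟨co, cp, cf, cf'⟩ := hc
  refine ⟨?_, ?_, ?_, ?_⟩
  · rintro x y x' y' ⟨z, h1, h2⟩ ⟨z', h1', h2'⟩ hlt
    exact co h2 h2' (bo h1 h1' hlt)
  · rintro x y ⟨z, h1, h2⟩
    rw [bp h1, cp h2]
  · rintro x y x' y' ⟨z, h1, h2⟩ ⟨z', h1', h2'⟩ hf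
    exact cf h2 h2' (bf h1 h1' hf)
  · rintro x y x' y' ⟨z, h1, h2⟩ ⟨z', h1', h2'⟩ hf
    exact bf' h1 h1' (cf' h2 h2' hf)

theorem IsIOF.inv {a : PInj n} (ha : IsIOF a) : IsIOF a.inv := by
  obtain ⟨ho, hp, hf, hf'⟩ := ha
  refine ⟨fun x y x' y' h h' hlt => ?_, fun x y h => (hp h).symm,
    fun _ _ _ _ h h' => hf' h h', fun _ _ _ _ h h' => hf h h'⟩
  rcases lt_trichotomy y y' with hyy | rfl | hyy
  · exact hyy
  · exact absurd (a.func h h') hlt.ne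
  · exact absurd (ho h' h hyy) hlt.not_gt

theorem isIOF_list_prod (l : List (PInj n)) (hl : ∀ g ∈ l, IsIOF g) : IsIOF l.prod := by
  induction l with
  | nil => exact isIOF_one
  | cons g l ih =>
    rw [List.prod_cons]
    exact (hl g List.mem_cons_self).mul (ih fun b hb => hl b (List.mem_cons_of_mem g hb))

theorem IsIOF.R_succ {a : PInj n} (ha : IsIOF a) {x y y' : ℕ} (h : a.R x y)
    (h' : a.R (x + 1) y') : y' = y + 1 := by
  have hlt : y < y' := ha.1 h h' (Nat.lt_succ_self x)
  rcases Nat.even_or_odd x with hx | hx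
  · obtain ⟨-, h | h⟩ := ha.2.2.1 h' h ⟨hx.add_one, Or.inr rfl⟩ <;> omega
  · obtain ⟨-, h | h⟩ := ha.2.2.1 h h' ⟨hx, Or.inl rfl⟩ <;> omega

theorem IsIOF.R_succ_right {a : PInj n} (ha : IsIOF a) {x x' y : ℕ} (h : a.R x y)
    (h' : a.R x' (y + 1)) : x' = x + 1 :=
  ha.inv.R_succ h h'

theorem isIOF_vMap (i : ℕ) : IsIOF (vMap n i) := by
  refine ⟨?_, ?_, ?_, ?_⟩
  · rintro x _ x' _ ⟨-, -, rfl⟩ ⟨-, -, rfl⟩ hlt; exact hlt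
  · rintro x _ ⟨-, -, rfl⟩; rfl
  · rintro x _ x' _ ⟨-, -, rfl⟩ ⟨-, -, rfl⟩ hf; exact hf
  · rintro x _ x' _ ⟨-, -, rfl⟩ ⟨-, -, rfl⟩ hf; exact hf

theorem isIOF_uMap (i : ℕ) : IsIOF (uMap n i) := by
  refine ⟨?_, ?_, ?_, ?_⟩
  · rintro x y x' y' ⟨-, -, h⟩ ⟨-, -, h'⟩ hlt; omega
  · rintro x y ⟨-, -, h⟩; omega
  all_goals
    rintro x y x' y' ⟨-, -, h⟩ ⟨-, -, h'⟩ hf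
    simp only [FenceLt, Nat.odd_iff] at hf ⊢
    omega

theorem IsIOF.translates_of_forall_mem_dom {a : PInj n} (ha : IsIOF a) {p q m : ℕ}
    (hpq : a.R p q) (hdom : ∀ k < m, p + k ∈ a.dom) : a.Translates p q m := by
  intro k hk
  induction k with
  | zero => exact hpq
  | succ k ih =>
    obtain ⟨y, hy⟩ := hdom (k + 1) hk
    rw [← add_assoc] at hy
    rwa [← add_assoc, ← add_assoc, ← ha.R_succ (ih (by omega)) hy]

theorem IsIOF.add_le_of_translates {a : PInj n} (ha : IsIOF a) {p q m p' q' m' : ℕ}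
    (h : a.Translates p q m) (h' : a.Translates p' q' m') (hpp' : p + m ≤ p') (hm : 0 < m)
    (hm' : 0 < m') : q + m ≤ q' := by
  have := ha.1 (h (m - 1) (by omega)) (h' 0 hm') (by omega)
  omega

theorem IsIOF.exists_translates_of_mul {b c : PInj n} (hb : IsIOF b) {p q m : ℕ}
    (h : (b * c).Translates p q m) :
    ∃ r, r % 2 = p % 2 ∧ b.Translates p r m ∧ c.Translates r q m := by
  rcases Nat.eq_zero_or_pos m with rfl | hm
  · exact ⟨p, rfl, translates_zero b p p, translates_zero c p q⟩
  obtain ⟨r, hpr, -⟩ := h 0 hm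
  have hb' : b.Translates p r m :=
    hb.translates_of_forall_mem_dom hpr fun k hk => let ⟨z, hz, _⟩ := h k hk; ⟨z, hz⟩
  refine ⟨r, (hb.2.1 hpr).symm, hb', fun k hk => ?_⟩
  obtain ⟨z, hz, hzc⟩ := h k hk
  rwa [b.func hz (hb' k hk)] at hzc

def IsIOFPrime (S : Set (PInj n)) : Prop :=
  1 ∉ S ∧ ∀ ⦃b c : PInj n⦄, IsIOF b → IsIOF c → b * c ∈ S → b ∈ S ∨ c ∈ S

theorem IsIOFPrime.exists_mem_of_prod_mem {S : Set (PInj n)} (hS : IsIOFPrime S)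
    (l : List (PInj n)) (hl : ∀ g ∈ l, IsIOF g) (h : l.prod ∈ S) : ∃ g ∈ l, g ∈ S := by
  induction l with
  | nil => exact absurd h hS.1
  | cons g l ih =>
    have hl' : ∀ b ∈ l, IsIOF b := fun b hb => hl b (List.mem_cons_of_mem g hb)
    rw [List.prod_cons] at h
    rcases hS.2 (hl g List.mem_cons_self) (isIOF_list_prod l hl') h with hg | hl
    · exact ⟨g, List.mem_cons_self, hg⟩
    · obtain ⟨b, hb, hbS⟩ := ih hl' hl
      exact ⟨b, List.mem_cons_of_mem g hb, hbS⟩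

theorem IsIOFPrime.preimage_inv {S : Set (PInj n)} (hS : IsIOFPrime S) :
    IsIOFPrime {a | a.inv ∈ S} := by
  refine ⟨fun h => hS.1 (inv_one (n := n) ▸ h), fun b c hb hc h => ?_⟩
  have h' : c.inv * b.inv ∈ S := mul_inv_rev b c ▸ h
  exact (hS.2 hc.inv hb.inv h').symm

theorem Generates.exists_mem {G : Set (PInj n)} (hG : Generates n G) {S : Set (PInj n)}
    (hS : IsIOFPrime S) {a : PInj n} (ha : IsIOF a) (haS : a ∈ S) : ∃ g ∈ G, g ∈ S := by
  obtain ⟨l, hlG, rfl⟩ := hG.2 a ha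
  obtain ⟨g, hgl, hgS⟩ := hS.exists_mem_of_prod_mem l (fun g hg => hG.1 g (hlG g hg)) haS
  exact ⟨g, hlG g hgl, hgS⟩

theorem vMap_translates_left (i : ℕ) (hi : i ≤ n) : (vMap n i).Translates 1 1 (i - 1) :=
  fun k hk => ⟨⟨by omega, by omega⟩, by omega, rfl⟩

theorem vMap_translates_right (i : ℕ) : (vMap n i).Translates (i + 1) (i + 1) (n - i) :=
  fun k hk => ⟨⟨by omega, by omega⟩, by omega, rfl⟩

theorem R_self_of_translates {a : PInj n} {i x : ℕ} (hl : a.Translates 1 1 (i - 1))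
    (hr : a.Translates (i + 1) (i + 1) (n - i)) (hx : x ∈ Set.Icc 1 n) (hxi : x ≠ i) :
    a.R x x := by
  obtain ⟨hx1, hx2⟩ := hx
  rcases Nat.lt_or_gt_of_ne hxi with h | h
  · simpa [Nat.add_sub_cancel' hx1] using hl.R_of_mem hx1 (by omega)
  · simpa [Nat.add_sub_cancel' h] using hr.R_of_mem h (by omega)

theorem IsIOF.eq_self_of_translates {a : PInj n} (ha : IsIOF a) {i y : ℕ}
    (hl : a.Translates 1 1 (i - 1)) (hr : a.Translates (i + 1) (i + 1) (n - i))
    (hy : a.R i y) : y = i := by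
  obtain ⟨hi1, hi2⟩ := a.memL hy
  obtain ⟨hy1, hy2⟩ := a.memR hy
  have hlo : 2 ≤ i → i - 1 < y := fun h2 =>
    ha.1 (R_self_of_translates hl hr ⟨by omega, by omega⟩ (by omega)) hy (by omega)
  have hhi : i < n → y < i + 1 := fun hn =>
    ha.1 hy (R_self_of_translates hl hr ⟨by omega, by omega⟩ (by omega)) (by omega)
  have := ha.2.1 hy
  omega

theorem eq_vMap_of_translates {a : PInj n} {i : ℕ} (hl : a.Translates 1 1 (i - 1))
    (hr : a.Translates (i + 1) (i + 1) (n - i)) (hi : i ∉ a.dom) : a = vMap n i := by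
  ext x y
  constructor
  · intro hxy
    have hxi : x ≠ i := by rintro rfl; exact hi ⟨y, hxy⟩
    have hx := a.memL hxy
    exact ⟨hx, hxi, a.func hxy (R_self_of_translates hl hr hx hxi)⟩
  · rintro ⟨hx, hxi, rfl⟩
    exact R_self_of_translates hl hr hx hxi

theorem isIOFPrime_vMap {i : ℕ} (hi : i ∈ Set.Icc 1 n) : IsIOFPrime {vMap n i} := by
  refine ⟨fun h => ?_, fun b c hb hc (h : b * c = vMap n i) => ?_⟩
  · have : (vMap n i).R i i := Set.mem_singleton_iff.mp h ▸ one_R.mpr ⟨hi, rfl⟩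
    exact this.2.1 rfl
  obtain ⟨r, hr, hbl, hcl⟩ := hb.exists_translates_of_mul (h ▸ vMap_translates_left i hi.2)
  obtain ⟨s, hs, hbr, hcr⟩ := hb.exists_translates_of_mul (h ▸ vMap_translates_right (n := n) i)
  have hbl' := hbl.bounds
  have hbr' := hbr.bounds
  have hlr : 0 < i - 1 → 0 < n - i → r + (i - 1) ≤ s :=
    hb.add_le_of_translates hbl hbr (by omega)
  -- `b` cannot move its blocks: they stay inside `[1, n]` and in order, with even shifts
  have hr1 : b.Translates 1 1 (i - 1) ∧ c.Translates 1 1 (i - 1) := by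
    obtain h0 | rfl : i - 1 = 0 ∨ r = 1 := by omega
    · rw [h0]; exact ⟨translates_zero b 1 1, translates_zero c 1 1⟩
    · exact ⟨hbl, hcl⟩
  have hs1 : b.Translates (i + 1) (i + 1) (n - i) ∧ c.Translates (i + 1) (i + 1) (n - i) := by
    obtain h0 | rfl : n - i = 0 ∨ s = i + 1 := by omega
    · rw [h0]; exact ⟨translates_zero b _ _, translates_zero c _ _⟩
    · exact ⟨hbr, hcr⟩
  by_cases hbi : i ∈ b.dom
  · right
    refine Set.mem_singleton_iff.mpr (eq_vMap_of_translates hr1.2 hs1.2 fun ⟨y, hy⟩ => ?_)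
    obtain ⟨z, hz⟩ := hbi
    rw [hb.eq_self_of_translates hr1.1 hs1.1 hz] at hz
    rw [hc.eq_self_of_translates hr1.2 hs1.2 hy] at hy
    have : (b * c).R i i := ⟨i, hz, hy⟩
    rw [h] at this
    exact this.2.1 rfl
  · exact Or.inl (eq_vMap_of_translates hr1.1 hs1.1 hbi)

theorem translates_uMap_sub_two (hn : 4 ≤ n) : (uMap n (n - 2)).Translates 1 3 (n - 2) :=
  fun k hk => ⟨⟨by omega, by omega⟩, ⟨by omega, by omega⟩, Or.inl ⟨by omega, by omega⟩⟩

theorem isIOFPrime_translates_one_three (hn : 4 ≤ n) :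
    IsIOFPrime {a : PInj n | IsIOF a ∧ a.Translates 1 3 (n - 2)} := by
  refine ⟨fun ⟨_, h⟩ => absurd (one_R.mp (h 0 (by omega))).2 (by omega), ?_⟩
  rintro b c hb hc ⟨-, h⟩
  obtain ⟨r, hr, hb', hc'⟩ := hb.exists_translates_of_mul h
  have := hb'.bounds (by omega)
  obtain rfl | rfl : r = 1 ∨ r = 3 := by omega
  · exact Or.inr ⟨hc, hc'⟩
  · exact Or.inl ⟨hb, hb'⟩

theorem IsIOF.dom_eq_of_translates_one_three {a : PInj n} (ha : IsIOF a) (hn : 4 ≤ n)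
    (h : a.Translates 1 3 (n - 2)) : a.dom = Set.Icc 1 (n - 2) := by
  ext x
  refine ⟨fun ⟨y, hxy⟩ => ⟨(a.memL hxy).1, ?_⟩, fun ⟨hx1, hx2⟩ => ⟨_, h.R_of_mem hx1 (by omega)⟩⟩
  by_contra hx
  have hlt := ha.1 (h (n - 3) (by omega)) hxy (by omega)
  have := (a.memR hxy).2
  omega

theorem IsIOF.im_eq_of_translates_one_three {a : PInj n} (ha : IsIOF a) (hn : 4 ≤ n)
    (h : a.Translates 1 3 (n - 2)) : a.im = Set.Icc 3 n := by
  ext y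
  constructor
  · rintro ⟨x, hxy⟩
    obtain ⟨hx1, hx2⟩ : x ∈ Set.Icc 1 (n - 2) :=
      ha.dom_eq_of_translates_one_three hn h ▸ ⟨y, hxy⟩
    have := a.func hxy (h.R_of_mem hx1 (by omega))
    exact ⟨by omega, by omega⟩
  · rintro ⟨hy1, hy2⟩
    have hxy := h.R_of_mem (x := y - 2) (by omega) (by omega)
    rw [show 3 + (y - 2 - 1) = y by omega] at hxy
    exact ⟨y - 2, hxy⟩

theorem not_isPartialId_of_translates_one_three {a : PInj n} (hn : 4 ≤ n)
    (h : a.Translates 1 3 (n - 2)) : ¬IsPartialId a :=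
  fun ha => absurd (ha (h 0 (by omega))) (by omega)

/-- `a` translates both blocks of `J_i = [1, i] ∪ [i + 4, n]`, narrowing the gap of width 3
between them to the single point `r + i`; `uMap n i` is such a map. -/
def ClosesGap (i : ℕ) (a : PInj n) : Prop :=
  ∃ r, a.Translates 1 r i ∧ a.Translates (i + 4) (r + i + 1) (n - i - 3)

theorem closesGap_uMap {i : ℕ} (hin : i + 4 ≤ n) : ClosesGap i (uMap n i) :=
  ⟨3, fun k hk => ⟨⟨by omega, by omega⟩, ⟨by omega, by omega⟩, Or.inl ⟨by omega, by omega⟩⟩,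
    fun k hk => ⟨⟨by omega, by omega⟩, ⟨by omega, by omega⟩, Or.inr ⟨by omega, by omega⟩⟩⟩

theorem isIOFPrime_closesGap {i : ℕ} (hi : 1 ≤ i) (hin : i + 4 ≤ n) :
    IsIOFPrime {a : PInj n | IsIOF a ∧ ClosesGap i a} := by
  refine ⟨fun ⟨_, r, h₁, h₂⟩ => ?_, ?_⟩
  · have := (one_R.mp (h₁ 0 hi)).2
    have := (one_R.mp (h₂ 0 (by omega))).2
    omega
  rintro b c hb hc ⟨-, r, h₁, h₂⟩
  obtain ⟨r₁, hr₁, hb₁, hc₁⟩ := hb.exists_translates_of_mul h₁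
  obtain ⟨r₂, hr₂, hb₂, hc₂⟩ := hb.exists_translates_of_mul h₂
  have := hb₁.bounds hi
  have := hb₂.bounds (by omega)
  have := hb.add_le_of_translates hb₁ hb₂ (by omega) hi (by omega)
  -- `(r₁, r₂)` is `(3, i + 4)`, `(1, i + 2)` or `(1, i + 4)`; in the last case `c` does the job
  by_cases hgap : r₂ = r₁ + i + 1
  · exact Or.inl ⟨hb, r₁, hb₁, hgap ▸ hb₂⟩
  · obtain ⟨rfl, rfl⟩ : r₁ = 1 ∧ r₂ = i + 4 := by omega
    exact Or.inr ⟨hc, r, hc₁, hc₂⟩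

theorem IsIOF.dom_eq_of_closesGap {a : PInj n} (ha : IsIOF a) {i : ℕ} (hi : 1 ≤ i)
    (hin : i + 4 ≤ n) (h : ClosesGap i a) : a.dom = Jset n i := by
  obtain ⟨r, h₁, h₂⟩ := h
  ext x
  constructor
  · rintro ⟨y, hxy⟩
    obtain ⟨hx1, hx2⟩ := a.memL hxy
    show (1 ≤ x ∧ x ≤ i) ∨ (i + 4 ≤ x ∧ x ≤ n)
    by_contra hx
    have hlo := ha.1 (h₁ (i - 1) (by omega)) hxy (by omega)
    have hhi := ha.1 hxy (h₂ 0 (by omega)) (by omega)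
    -- `a x` is squeezed to `r + i`, so `x` would be adjacent to both `i` and `i + 4`
    obtain rfl : y = r + i := by omega
    have e₁ : x = 1 + (i - 1) + 1 := ha.R_succ_right (h₁ (i - 1) (by omega))
      (by rwa [show r + (i - 1) + 1 = r + i by omega])
    have e₂ : i + 4 = x + 1 := ha.R_succ_right hxy (h₂ 0 (by omega))
    omega
  · rintro (⟨hx1, hx2⟩ | ⟨hx1, hx2⟩)
    · exact ⟨_, h₁.R_of_mem hx1 (by omega)⟩
    · exact ⟨_, h₂.R_of_mem hx1 (by omega)⟩

theorem not_isPartialId_of_closesGap {a : PInj n} {i : ℕ} (hi : 1 ≤ i) (hin : i + 4 ≤ n)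
    (h : ClosesGap i a) : ¬IsPartialId a := by
  obtain ⟨r, h₁, h₂⟩ := h
  intro ha
  have := ha (h₁ 0 hi)
  have := ha (h₂ 0 (by omega))
  omega

theorem IsIOF.not_endpoints_mem_im_of_closesGap {a : PInj n} (ha : IsIOF a) {i : ℕ}
    (hi : 1 ≤ i) (hin : i + 4 ≤ n) (h : ClosesGap i a) : ¬(1 ∈ a.im ∧ n ∈ a.im) := by
  obtain ⟨r, h₁, h₂⟩ := h
  rintro ⟨⟨x, hx⟩, ⟨x', hx'⟩⟩
  have hfirst := h₁ 0 hi
  have hlast := h₂ (n - i - 4) (by omega)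
  rw [show i + 4 + (n - i - 4) = n by omega] at hlast
  have := (a.memL hx).1
  have := (a.memL hx').2
  have := (a.memR hfirst).1
  have := (a.memR hlast).2
  have h1 : x = 1 := by
    by_contra hne
    have := ha.1 hfirst hx (by omega)
    omega
  have h2 : x' = n := by
    by_contra hne
    have := ha.1 hx' hlast (by omega)
    omega
  subst h1 h2
  have := a.func hfirst hx
  have := a.func hlast hx'
  omega

open Classical in
/-- Constant on each of the prime sets used below, with different values on different ones. -/
noncomputable def PInj.signature (a : PInj n) : ℕ × Set ℕ :=
  if IsPartialId a then (0, a.dom) else if 1 ∈ a.dom ∧ n ∈ a.dom then (1, a.dom) else (2, a.im)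

theorem signature_vMap (i : ℕ) : (vMap n i).signature = (0, Set.Icc 1 n \ {i}) := by
  have hid : IsPartialId (vMap n i) := fun _ _ h => h.2.2
  have hdom : (vMap n i).dom = Set.Icc 1 n \ {i} := by
    ext x
    exact ⟨fun ⟨_, hx, hxi, _⟩ => ⟨hx, hxi⟩, fun ⟨hx, hxi⟩ => ⟨x, hx, hxi, rfl⟩⟩
  rw [signature, if_pos hid, hdom]

theorem IsIOF.signature_of_closesGap {a : PInj n} (ha : IsIOF a) {i : ℕ} (hi : 1 ≤ i)
    (hin : i + 4 ≤ n) (h : ClosesGap i a) : a.signature = (1, Jset n i) := by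
  have hdom := ha.dom_eq_of_closesGap hi hin h
  have hfull : 1 ∈ a.dom ∧ n ∈ a.dom := by
    rw [hdom]; exact ⟨Or.inl ⟨le_rfl, hi⟩, Or.inr ⟨hin, le_rfl⟩⟩
  rw [signature, if_neg (not_isPartialId_of_closesGap hi hin h), if_pos hfull, hdom]

theorem IsIOF.signature_of_closesGap_inv {a : PInj n} (ha : IsIOF a) {i : ℕ} (hi : 1 ≤ i)
    (hin : i + 4 ≤ n) (h : ClosesGap i a.inv) : a.signature = (2, Jset n i) := by
  have hid : ¬IsPartialId a := isPartialId_inv_iff.not.mp (not_isPartialId_of_closesGap hi hin h)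
  have hfull := ha.inv.not_endpoints_mem_im_of_closesGap hi hin h
  rw [im_inv] at hfull
  rw [signature, if_neg hid, if_neg hfull, ← dom_inv, ha.inv.dom_eq_of_closesGap hi hin h]

theorem IsIOF.signature_of_translates_one_three {a : PInj n} (ha : IsIOF a) (hn : 4 ≤ n)
    (h : a.Translates 1 3 (n - 2)) : a.signature = (2, Set.Icc 3 n) := by
  have hfull : ¬(1 ∈ a.dom ∧ n ∈ a.dom) := by
    rw [ha.dom_eq_of_translates_one_three hn h]; exact fun ⟨_, h⟩ => absurd h.2 (by omega)
  rw [signature, if_neg (not_isPartialId_of_translates_one_three hn h), if_neg hfull,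
    ha.im_eq_of_translates_one_three hn h]

theorem IsIOF.signature_of_translates_one_three_inv {a : PInj n} (ha : IsIOF a) (hn : 4 ≤ n)
    (h : a.inv.Translates 1 3 (n - 2)) : a.signature = (2, Set.Icc 1 (n - 2)) := by
  have hid : ¬IsPartialId a :=
    isPartialId_inv_iff.not.mp (not_isPartialId_of_translates_one_three hn h)
  have hfull : ¬(1 ∈ a.dom ∧ n ∈ a.dom) := by
    rw [← im_inv, ha.inv.im_eq_of_translates_one_three hn h]
    exact fun ⟨h, _⟩ => absurd h.1 (by omega)
  rw [signature, if_neg hid, if_neg hfull, ← dom_inv, ha.inv.dom_eq_of_translates_one_three hn h]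

/-- The signatures of the prime sets: `{v_i}`, the `J_i`-gap closers, their inverses, and the
translation of `[1, n - 2]` by `2` (`true`) and its inverse (`false`). -/
def primeSignature (n : ℕ) : ℕ ⊕ ℕ ⊕ ℕ ⊕ Bool → ℕ × Set ℕ
  | .inl i => (0, Set.Icc 1 n \ {i})
  | .inr (.inl i) => (1, Jset n i)
  | .inr (.inr (.inl i)) => (2, Jset n i)
  | .inr (.inr (.inr true)) => (2, Set.Icc 3 n)
  | .inr (.inr (.inr false)) => (2, Set.Icc 1 (n - 2))

def primeIndex (n : ℕ) : Finset (ℕ ⊕ ℕ ⊕ ℕ ⊕ Bool) :=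
  (Finset.Icc 1 n).disjSum ((Finset.Icc 1 (n - 4)).disjSum
    ((Finset.Icc 1 (n - 4)).disjSum Finset.univ))

theorem card_primeIndex (hn : 4 ≤ n) : (primeIndex n).card = 3 * n - 6 := by
  simp only [primeIndex, Finset.card_disjSum, Nat.card_Icc, Finset.card_univ, Fintype.card_bool]
  omega

theorem primeSignature_injOn (hn : 4 ≤ n) : Set.InjOn (primeSignature n) (primeIndex n) := by
  rintro (i | i | i | _ | _) hi (j | j | j | _ | _) hj h <;>
    simp only [primeIndex, Finset.mem_coe, Finset.inl_mem_disjSum, Finset.inr_mem_disjSum,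
      Finset.mem_Icc, primeSignature, Prod.mk.injEq, Set.ext_iff, Jset, Set.mem_Icc,
      Set.mem_sdiff, Set.mem_singleton_iff, Set.mem_ofPred_eq, Sum.inl.injEq, Sum.inr.injEq]
      at hi hj h ⊢
  all_goals
    obtain ⟨htag, hset⟩ := h
    first
      | omega
      | (have := hset i; have := hset j; omega)
      | (have := hset 1; have := hset n; omega)
      | (have := hset (i + 1); have := hset (j + 1); omega)

theorem Generates.exists_signature_eq {G : Set (PInj n)} (hG : Generates n G) (hn : 4 ≤ n) :
    ∀ k ∈ primeIndex n, ∃ g ∈ G, g.signature = primeSignature n k := by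
  rintro (i | i | i | _ | _) hk <;> simp only [primeIndex, Finset.inl_mem_disjSum,
    Finset.inr_mem_disjSum, Finset.mem_Icc] at hk
  · obtain ⟨g, hg, rfl⟩ := hG.exists_mem (isIOFPrime_vMap hk) (isIOF_vMap i) rfl
    exact ⟨_, hg, signature_vMap i⟩
  · obtain ⟨g, hg, hgI, hgS⟩ := hG.exists_mem (isIOFPrime_closesGap hk.1 (by omega))
      (isIOF_uMap i) ⟨isIOF_uMap i, closesGap_uMap (by omega)⟩
    exact ⟨g, hg, hgI.signature_of_closesGap hk.1 (by omega) hgS⟩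
  · obtain ⟨g, hg, hgS⟩ := hG.exists_mem (isIOFPrime_closesGap hk.1 (by omega)).preimage_inv
      (isIOF_uMap i).inv ⟨isIOF_uMap i, closesGap_uMap (by omega)⟩
    exact ⟨g, hg, (hG.1 g hg).signature_of_closesGap_inv hk.1 (by omega) hgS.2⟩
  · obtain ⟨g, hg, hgS⟩ := hG.exists_mem (isIOFPrime_translates_one_three hn).preimage_inv
      (isIOF_uMap (n - 2)).inv ⟨isIOF_uMap (n - 2), translates_uMap_sub_two hn⟩
    exact ⟨g, hg, (hG.1 g hg).signature_of_translates_one_three_inv hn hgS.2⟩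
  · obtain ⟨g, hg, hgI, hgS⟩ := hG.exists_mem (isIOFPrime_translates_one_three hn)
      (isIOF_uMap (n - 2)) ⟨isIOF_uMap (n - 2), translates_uMap_sub_two hn⟩
    exact ⟨g, hg, hgI.signature_of_translates_one_three hn hgS⟩

end

/-- every generating set of `IOF_n^par` has at least `3n - 6` elements. -/
theorem stmt13 (n : ℕ) (hn : 4 ≤ n) (G : Finset (PInj n))
    (hG : Generates n (G : Set (PInj n))) :
    3 * n - 6 ≤ G.card := by
  classical
  calc 3 * n - 6 = ((primeIndex n).image (primeSignature n)).card := by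
        rw [Finset.card_image_of_injOn (primeSignature_injOn hn), card_primeIndex hn]
    _ ≤ G.card := Finset.card_le_card_of_surjOn PInj.signature fun _ hs => by
        obtain ⟨k, hk, rfl⟩ := Finset.mem_image.mp hs
        exact hG.exists_signature_eq hn k hk
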